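/- Let d = MN, let K ⊆ ℂ^d be a nonempty closed set, let c ∈ ℂ^d, and let η > 0, L > 0. Let (ρ_k)_{k∈ℕ} be a sequence of positive reals with ρ_k → ∞, and for each k let v_k ∈ K be a minimizer over K of f_k(v) = (η/L)‖v‖_{2,1} + (ρ_k/2)‖v − c‖₂², where ‖v‖_{2,1} = ∑_{n=1}^N ‖v_{(n)}‖₂ with blocks v_{(n)} = (v(n), v(n+N), …, v(n+(M−1)N)). If v_k converges to some v_∞ ∈ ℂ^d, then v_∞ ∈ K and ‖v_∞ − c‖₂ = inf_{v ∈ K} ‖v − c‖₂, i.e., v_∞ is a closest point of K to c. -/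

import Mathlib

/-! Dividing the minimality inequality of `v k` against a fixed `u ∈ K` by the weight gives
`‖v k - c‖² ≤ ‖u - c‖² + 2 (g u - a) / ρ k`, where `a` is a lower bound of the regulariser `g`;
letting `k → ∞` yields `‖vinf - c‖ ≤ ‖u - c‖`, while `vinf ∈ K` because `K` is closed. -/

open Filter

/-- The `n`-th antenna block `v_{(n)} ∈ ℂ^M` of a stacked vector `v ∈ ℂ^{MN}`
(index `(m, n)` corresponds to entry `n + mN` of the stacked vector). -/
noncomputable def antennaBlock (M N : ℕ) (v : EuclideanSpace ℂ (Fin M × Fin N)) (n : Fin N) :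
    EuclideanSpace ℂ (Fin M) :=
  WithLp.toLp 2 (fun m => v (m, n))

/-- The mixed `ℓ_{2,1}` norm `‖v‖_{2,1} = ∑_{n=1}^N ‖v_{(n)}‖₂`. -/
noncomputable def norm21 (M N : ℕ) (v : EuclideanSpace ℂ (Fin M × Fin N)) : ℝ :=
  ∑ n, ‖antennaBlock M N v n‖

open Topology Set

theorem isMinOn_of_tendsto_penalized_minimizers {ι E : Type*} [TopologicalSpace E]
    {l : Filter ι} [l.NeBot] {K : Set E} {g h : E → ℝ} (hg : BddBelow (range g))
    (hh : Continuous h) {ρ : ι → ℝ} (hρ : Tendsto ρ l atTop) {v : ι → E}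
    (hvmin : ∀ i, ∀ u ∈ K, g (v i) + ρ i * h (v i) ≤ g u + ρ i * h u)
    {x : E} (hx : Tendsto v l (𝓝 x)) : IsMinOn h K x := by
  obtain ⟨a, ha⟩ := hg
  refine isMinOn_iff.2 fun u hu => ?_
  have hbound : ∀ᶠ i in l, h (v i) ≤ h u + (g u - a) / ρ i := by
    filter_upwards [hρ.eventually_gt_atTop 0] with i hi
    rw [← sub_le_iff_le_add', le_div_iff₀ hi]
    linarith [hvmin i u hu, ha ⟨v i, rfl⟩]
  have hlim : Tendsto (fun i => h u + (g u - a) / ρ i) l (𝓝 (h u)) := by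
    simpa using tendsto_const_nhds.add (tendsto_const_nhds.div_atTop hρ)
  exact le_of_tendsto_of_tendsto ((hh.tendsto x).comp hx) hlim hbound

theorem norm21_nonneg (M N : ℕ) (v : EuclideanSpace ℂ (Fin M × Fin N)) : 0 ≤ norm21 M N v :=
  Finset.sum_nonneg fun _ _ => norm_nonneg _

theorem penalized_minimizers_tendto_projection_general (M N : ℕ)
    (K : Set (EuclideanSpace ℂ (Fin M × Fin N))) (hKcl : IsClosed K)
    (c : EuclideanSpace ℂ (Fin M × Fin N)) (η L : ℝ) (hη : 0 < η) (hL : 0 < L)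
    (ρ : ℕ → ℝ) (hρ : Tendsto ρ atTop atTop)
    (v : ℕ → EuclideanSpace ℂ (Fin M × Fin N)) (hvK : ∀ k, v k ∈ K)
    (hvmin : ∀ k, ∀ u ∈ K,
      η / L * norm21 M N (v k) + ρ k / 2 * ‖v k - c‖ ^ 2
        ≤ η / L * norm21 M N u + ρ k / 2 * ‖u - c‖ ^ 2)
    (vinf : EuclideanSpace ℂ (Fin M × Fin N))
    (hconv : Tendsto v atTop (nhds vinf)) :
    vinf ∈ K ∧ ‖vinf - c‖ = ⨅ u : K, ‖(u : EuclideanSpace ℂ (Fin M × Fin N)) - c‖ := by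
  have hmem : vinf ∈ K := hKcl.mem_of_tendsto hconv (Eventually.of_forall hvK)
  have hbdd : BddBelow (range fun u => η / L * norm21 M N u) :=
    ⟨0, by rintro _ ⟨u, rfl⟩; exact mul_nonneg (div_pos hη hL).le (norm21_nonneg M N u)⟩
  have hsq : IsMinOn (fun u => ‖u - c‖ ^ 2) K vinf :=
    isMinOn_of_tendsto_penalized_minimizers hbdd (by fun_prop) (hρ.atTop_div_const two_pos)
      hvmin hconv
  have hdist : IsMinOn (fun u => ‖u - c‖) K vinf := isMinOn_iff.2 fun u hu =>
    (pow_le_pow_iff_left₀ (norm_nonneg _) (norm_nonneg _) two_ne_zero).1 (hsq hu)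
  exact ⟨hmem, (hdist.iInf_eq hmem).symm⟩

/-- let `K ⊆ ℂ^{MN}` be nonempty and closed, `ρ_k → ∞`, and for each `k`
let `v_k` minimize `f_k(v) = (η/L)‖v‖_{2,1} + (ρ_k/2)‖v − c‖₂²` over `K`.  If
`v_k → v_∞`, then `v_∞ ∈ K` and `v_∞` is a closest point of `K` to `c`. -/
theorem penalized_minimizers_tendto_projection (M N : ℕ)
    (K : Set (EuclideanSpace ℂ (Fin M × Fin N))) (hKne : K.Nonempty) (hKcl : IsClosed K)
    (c : EuclideanSpace ℂ (Fin M × Fin N)) (η L : ℝ) (hη : 0 < η) (hL : 0 < L)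
    (ρ : ℕ → ℝ) (hρpos : ∀ k, 0 < ρ k) (hρ : Tendsto ρ atTop atTop)
    (v : ℕ → EuclideanSpace ℂ (Fin M × Fin N)) (hvK : ∀ k, v k ∈ K)
    (hvmin : ∀ k, ∀ u ∈ K,
      η / L * norm21 M N (v k) + ρ k / 2 * ‖v k - c‖ ^ 2
        ≤ η / L * norm21 M N u + ρ k / 2 * ‖u - c‖ ^ 2)
    (vinf : EuclideanSpace ℂ (Fin M × Fin N))
    (hconv : Tendsto v atTop (nhds vinf)) :
    vinf ∈ K ∧ ‖vinf - c‖ = ⨅ u : K, ‖(u : EuclideanSpace ℂ (Fin M × Fin N)) - c‖ :=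
  penalized_minimizers_tendto_projection_general M N K hKcl c η L hη hL ρ hρ v hvK hvmin vinf hconv
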